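/- For every finite linearly ordered set J with at least 2 elements, the canonical map J → J** is an isomorphism, where J* = Hom_∇(J,{0,1}) with pointwise order (a nonempty finite linearly ordered set) and J** = Hom_{Δ_big}(J*,{0,1}). -/

import Mathlib

/-!
STATEMENT 2: For every finite linearly ordered set `J` with at least 2 elements
(equivalently, with distinct minimal element `⊥` and maximal element `⊤`),
the canonical map `J → J**` is an isomorphism of ordered sets, where
`J* = Hom_∇(J, {0,1})` is the set of nondecreasing maps `J → Fin 2` sending
`⊥ ↦ 0`, `⊤ ↦ 1`, with the pointwise order (a nonempty finite linear order,
i.e. an object of `Δ_big`), and `J** = Hom_{Δ_big}(J*, {0,1})` is the set of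
all nondecreasing maps `J* → Fin 2`, with the pointwise order.
The canonical map sends `j` to evaluation at `j`.
-/

/-- `J*`: nondecreasing maps `J → Fin 2` preserving min and max. -/
def NablaStar (J : Type*) [Preorder J] [OrderBot J] [OrderTop J] : Type _ :=
  {f : J →o Fin 2 // f ⊥ = 0 ∧ f ⊤ = 1}

instance (J : Type*) [Preorder J] [OrderBot J] [OrderTop J] :
    Preorder (NablaStar J) := Subtype.preorder _

/-- `J**`: all nondecreasing maps `J* → Fin 2`, with the pointwise order. -/
def NablaDoubleStar (J : Type*) [Preorder J] [OrderBot J] [OrderTop J] : Type _ :=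
  {g : NablaStar J → Fin 2 // Monotone g}

instance (J : Type*) [Preorder J] [OrderBot J] [OrderTop J] :
    Preorder (NablaDoubleStar J) := Subtype.preorder _

/-- The canonical map `J → J**`, sending `j` to evaluation at `j`. -/
def nablaEvalMap (J : Type*) [Preorder J] [OrderBot J] [OrderTop J] (j : J) :
    NablaDoubleStar J :=
  ⟨fun f => f.1 j, fun _ _ h => h j⟩

/-!
An element `f` of `J*` is determined by the least `x` with `f x = 1`, so `J*` is
`J ∖ {⊥}` with the reversed order, via `x ↦ 𝟙[x ≤ ·]`. An element `g` of `J**` is then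
determined by the largest `j` such that `g` is `1` on all indicators `𝟙[x ≤ ·]` with `x ≤ j`
(`j = ⊥` when there is none), and `g` is evaluation at this `j`.
-/

namespace NablaStar

section PartialOrder

variable {J : Type*} [PartialOrder J] [BoundedOrder J] [DecidableLE J]

def ici (x : J) (hx : x ≠ ⊥) : NablaStar J :=
  ⟨⟨fun t => if x ≤ t then 1 else 0, fun a b hab => by
      dsimp only
      split_ifs with ha hb <;> first | rfl | exact Fin.zero_le _ | exact absurd (ha.trans hab) hb⟩,
    show ite _ _ _ = _ from if_neg (by rwa [le_bot_iff]), show ite _ _ _ = _ from if_pos le_top⟩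

theorem ici_apply (x : J) (hx : x ≠ ⊥) (t : J) :
    (ici x hx).1 t = if x ≤ t then 1 else 0 := rfl

theorem ici_le_ici {x y : J} (hx : x ≠ ⊥) (hy : y ≠ ⊥) (hyx : y ≤ x) : ici x hx ≤ ici y hy :=
  fun t => by
    simp only [ici_apply]
    split_ifs with hxt hyt <;> first | rfl | exact Fin.zero_le _ | exact absurd (hyx.trans hxt) hyt

end PartialOrder

variable {J : Type*} [LinearOrder J] [BoundedOrder J]

theorem exists_eq_ici [WellFoundedLT J] (f : NablaStar J) : ∃ x, ∃ hx : x ≠ ⊥, f = ici x hx := by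
  obtain ⟨x, hx1, hmin⟩ := wellFounded_lt.has_min {t | f.1 t = 1} ⟨⊤, f.2.2⟩
  have hx : x ≠ ⊥ := by
    rintro rfl
    exact absurd (f.2.1.symm.trans hx1) (by decide)
  refine ⟨x, hx, Subtype.ext <| OrderHom.ext _ _ <| funext fun t => ?_⟩
  rw [ici_apply]
  split_ifs with hxt
  · have := f.1.monotone hxt
    rw [hx1] at this
    omega
  · have : f.1 t ≠ 1 := fun ht => hmin t ht (not_le.mp hxt)
    omega

end NablaStar

open NablaStar

section

variable {J : Type*} [LinearOrder J] [BoundedOrder J]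

theorem nablaEvalMap_apply_ici (j x : J) (hx : x ≠ ⊥) :
    (nablaEvalMap J j).1 (ici x hx) = if x ≤ j then 1 else 0 := rfl

theorem nablaEvalMap_le_nablaEvalMap_iff {i j : J} :
    nablaEvalMap J i ≤ nablaEvalMap J j ↔ i ≤ j := by
  refine ⟨fun hij => ?_, fun hij f => f.1.monotone hij⟩
  by_contra hji
  have hi : i ≠ ⊥ := ne_bot_of_gt (not_le.mp hji)
  have := hij (ici i hi)
  simp [nablaEvalMap_apply_ici, hji] at this

theorem nablaEvalMap_injective : Function.Injective (nablaEvalMap J) :=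
  fun i j hij => le_antisymm (nablaEvalMap_le_nablaEvalMap_iff.mp hij.le)
    (nablaEvalMap_le_nablaEvalMap_iff.mp hij.ge)

theorem nablaEvalMap_surjective [WellFoundedLT J] [WellFoundedGT J] :
    Function.Surjective (nablaEvalMap J) := by
  intro g
  let S : Set J := {x | ∀ hx : x ≠ ⊥, g.1 (ici x hx) = 1}
  obtain ⟨j, hjS, hmax⟩ := wellFounded_gt.has_min S ⟨⊥, fun h => absurd rfl h⟩
  refine ⟨j, Subtype.ext <| funext fun f => ?_⟩
  obtain ⟨x, hx, rfl⟩ := exists_eq_ici f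
  rw [nablaEvalMap_apply_ici]
  split_ifs with hxj
  · have hj : j ≠ ⊥ := ne_bot_of_le_ne_bot hx hxj
    have := g.2 (ici_le_ici hj hx hxj)
    rw [hjS hj] at this
    omega
  · have : g.1 (ici x hx) ≠ 1 := fun hgx =>
      hmax x (fun _ => hgx) (not_le.mp hxj)
    omega

end

theorem nablaEvalMap_isOrderIso_general (J : Type*) [LinearOrder J] [Fintype J]
    [BoundedOrder J] :
    Function.Bijective (nablaEvalMap J) ∧
      ∀ i j : J, i ≤ j ↔ nablaEvalMap J i ≤ nablaEvalMap J j :=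
  ⟨⟨nablaEvalMap_injective, nablaEvalMap_surjective⟩,
    fun _ _ => nablaEvalMap_le_nablaEvalMap_iff.symm⟩

theorem nablaEvalMap_isOrderIso (J : Type*) [LinearOrder J] [Fintype J]
    [BoundedOrder J] (h : (⊥ : J) ≠ ⊤) :
    Function.Bijective (nablaEvalMap J) ∧
      ∀ i j : J, i ≤ j ↔ nablaEvalMap J i ≤ nablaEvalMap J j :=
  nablaEvalMap_isOrderIso_general J
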